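/- arXiv:2211.05046 — 3 statements merged into one kernel-verified Lean document; each statement's English description precedes it below -/
import Mathlib

section
/- Define a sequence of rational functions by r_0(z) = z, r_1(z) = ε_1/(z - a_1), and r_{n+2}(z) = r_n(z) + ε_{n+2}/(r_{n+1}(z) - a_{n+2}), where ε_n ≠ 0. Suppose that for every n, the pole sets of r_n and r_{n+1} are disjoint and the solution set of r_{n+1} = a_{n+2} is disjoint from the pole set of r_n. Then for every n ≥ 0, the pole set of r_n is strictly contained in the pole set of r_{n+2}. -/
open scoped OnePoint
open Polynomial

/-- The set of poles of a rational function, as a subset of the Riemann sphere `ℂ ∪ {∞}`: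
the finite poles are the zeros of the denominator, and `∞` is a pole precisely when the
numerator has larger degree than the denominator. -/
def poleSet (f : RatFunc ℂ) : Set (OnePoint ℂ) :=
  {x | ∃ z : ℂ, x = (z : OnePoint ℂ) ∧ f.denom.eval z = 0} ∪
    {x | x = ∞ ∧ f.denom.natDegree < f.num.natDegree}

/-- The set of solutions of `f = c` on the Riemann sphere `ℂ ∪ {∞}`. -/
def solSet (f : RatFunc ℂ) (c : ℂ) : Set (OnePoint ℂ) :=
  {x | ∃ z : ℂ, x = (z : OnePoint ℂ) ∧ f.denom.eval z ≠ 0 ∧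
      f.num.eval z = c * f.denom.eval z} ∪
    {x | x = ∞ ∧ f.num.natDegree ≤ f.denom.natDegree ∧
      f.num.coeff f.denom.natDegree = c * f.denom.leadingCoeff}

theorem my_num_denom_unique {p q : ℂ[X]} (hq : q.Monic) (hpq : IsCoprime p q) :
    (algebraMap ℂ[X] (RatFunc ℂ) p / algebraMap ℂ[X] (RatFunc ℂ) q).num = p ∧
    (algebraMap ℂ[X] (RatFunc ℂ) p / algebraMap ℂ[X] (RatFunc ℂ) q).denom = q := by
  set f := algebraMap ℂ[X] (RatFunc ℂ) p / algebraMap ℂ[X] (RatFunc ℂ) q with hf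
  have h : f.num * q = p * f.denom := (RatFunc.num_mul_eq_mul_denom_iff hq.ne_zero).mpr rfl
  have hd : f.denom ∣ q :=
    ((RatFunc.isCoprime_num_denom f).symm).dvd_of_dvd_mul_left (h ▸ dvd_mul_left f.denom p)
  have hq' : q ∣ f.denom :=
    (hpq.symm).dvd_of_dvd_mul_left (h ▸ dvd_mul_left q f.num)
  have hdq : f.denom = q :=
    Polynomial.eq_of_monic_of_associated (RatFunc.monic_denom f) hq (associated_of_dvd_dvd hd hq')
  refine ⟨?_, hdq⟩
  rw [hdq] at h
  exact mul_right_cancel₀ hq.ne_zero h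

theorem coprime_eval {p q : ℂ[X]} (h : IsCoprime p q) {z : ℂ} (hp : p.eval z = 0) :
    q.eval z ≠ 0 := by
  obtain ⟨u, v, huv⟩ := h
  intro hq
  have := congrArg (Polynomial.eval z) huv
  simp [hp, hq] at this

theorem num_denom_sub_C (f : RatFunc ℂ) (c : ℂ) :
    (f - RatFunc.C c).num = f.num - Polynomial.C c * f.denom ∧
    (f - RatFunc.C c).denom = f.denom := by
  have hden : algebraMap ℂ[X] (RatFunc ℂ) f.denom ≠ 0 :=
    RatFunc.algebraMap_ne_zero (RatFunc.denom_ne_zero f)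
  have h : f - RatFunc.C c = algebraMap ℂ[X] (RatFunc ℂ) (f.num - Polynomial.C c * f.denom) /
      algebraMap ℂ[X] (RatFunc ℂ) f.denom := by
    rw [map_sub, map_mul, RatFunc.algebraMap_C, sub_div, mul_div_assoc,
      div_self hden, mul_one, RatFunc.num_div_denom]
  rw [h]
  refine my_num_denom_unique (RatFunc.monic_denom f) ?_
  have := (RatFunc.isCoprime_num_denom f).add_mul_right_left (-Polynomial.C c)
  simpa [sub_eq_add_neg, mul_comm, neg_mul, mul_neg] using this

theorem C_div_algebraMap {ε : ℂ} (hε : ε ≠ 0) {N D : ℂ[X]} (hN : N ≠ 0) (hD : D ≠ 0) :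
    RatFunc.C ε / (algebraMap ℂ[X] (RatFunc ℂ) N / algebraMap ℂ[X] (RatFunc ℂ) D) =
    algebraMap ℂ[X] (RatFunc ℂ) (Polynomial.C (ε * N.leadingCoeff⁻¹) * D) /
    algebraMap ℂ[X] (RatFunc ℂ) (Polynomial.C N.leadingCoeff⁻¹ * N) := by
  have haN : algebraMap ℂ[X] (RatFunc ℂ) N ≠ 0 := RatFunc.algebraMap_ne_zero hN
  have hl : N.leadingCoeff ≠ 0 := leadingCoeff_ne_zero.mpr hN
  rw [div_div_eq_mul_div, ← RatFunc.algebraMap_C ε, ← map_mul,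
    div_eq_div_iff haN (RatFunc.algebraMap_ne_zero
      (mul_ne_zero (Polynomial.C_ne_zero.mpr (inv_ne_zero hl)) hN)),
    ← map_mul, ← map_mul]
  exact congrArg _ (by rw [Polynomial.C_mul]; ring)

theorem num_denom_C_div {ε : ℂ} (hε : ε ≠ 0) {k : RatFunc ℂ} (hk : k ≠ 0) :
    (RatFunc.C ε / k).num = Polynomial.C (ε * k.num.leadingCoeff⁻¹) * k.denom ∧
    (RatFunc.C ε / k).denom = Polynomial.C k.num.leadingCoeff⁻¹ * k.num := by
  have hnum0 : k.num ≠ 0 := RatFunc.num_ne_zero hk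
  have hl : k.num.leadingCoeff ≠ 0 := leadingCoeff_ne_zero.mpr hnum0
  have hnum : algebraMap ℂ[X] (RatFunc ℂ) k.num ≠ 0 := RatFunc.algebraMap_ne_zero hnum0
  have hden : algebraMap ℂ[X] (RatFunc ℂ) k.denom ≠ 0 :=
    RatFunc.algebraMap_ne_zero (RatFunc.denom_ne_zero k)
  have h : RatFunc.C ε / k = algebraMap ℂ[X] (RatFunc ℂ)
        (Polynomial.C (ε * k.num.leadingCoeff⁻¹) * k.denom) /
      algebraMap ℂ[X] (RatFunc ℂ) (Polynomial.C k.num.leadingCoeff⁻¹ * k.num) := by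
    have := C_div_algebraMap hε hnum0 (RatFunc.denom_ne_zero k)
    rwa [RatFunc.num_div_denom k] at this
  rw [h]
  refine my_num_denom_unique ?_ ?_
  · rw [mul_comm]
    exact Polynomial.monic_mul_leadingCoeff_inv hnum0
  · have h1 := (RatFunc.isCoprime_num_denom k).symm
    have hu1 : IsUnit (Polynomial.C (ε * k.num.leadingCoeff⁻¹)) :=
      Polynomial.isUnit_C.mpr (IsUnit.mk0 _ (mul_ne_zero hε (inv_ne_zero hl)))
    have hu2 : IsUnit (Polynomial.C k.num.leadingCoeff⁻¹) :=
      Polynomial.isUnit_C.mpr (IsUnit.mk0 _ (inv_ne_zero hl))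
    exact (isCoprime_mul_unit_left_left hu1 _ _).mpr
      ((isCoprime_mul_unit_left_right hu2 _ _).mpr h1)

theorem poleSet_C_div_eq_solSet {ε c : ℂ} (hε : ε ≠ 0) {h : RatFunc ℂ}
    (hne : h ≠ RatFunc.C c) :
    poleSet (RatFunc.C ε / (h - RatFunc.C c)) = solSet h c := by
  have hk : h - RatFunc.C c ≠ 0 := sub_ne_zero.mpr hne
  obtain ⟨hn2, hd2⟩ := num_denom_sub_C h c
  obtain ⟨hn1, hd1⟩ := num_denom_C_div hε hk
  set p := h.num - Polynomial.C c * h.denom with hpdef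
  have hp0 : p ≠ 0 := by rw [← hn2]; exact RatFunc.num_ne_zero hk
  have hl : p.leadingCoeff ≠ 0 := leadingCoeff_ne_zero.mpr hp0
  have hcop : IsCoprime p h.denom := by
    have := RatFunc.isCoprime_num_denom (h - RatFunc.C c)
    rwa [hn2, hd2] at this
  rw [hn2] at hn1 hd1
  rw [hd2] at hn1
  set d := h.denom.natDegree with hd
  have hCle : (Polynomial.C c * h.denom).natDegree ≤ d := natDegree_C_mul_le c h.denom
  ext x
  simp only [poleSet, solSet, Set.mem_union, Set.mem_setOf_eq, hn1, hd1]
  constructor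
  · rintro (⟨z, rfl, hz⟩ | ⟨rfl, hdeg⟩)
    · left
      have hpz : p.eval z = 0 := by
        rw [eval_mul, eval_C, mul_eq_zero] at hz
        exact hz.resolve_left (inv_ne_zero hl)
      refine ⟨z, rfl, coprime_eval hcop hpz, ?_⟩
      have h1 : h.num.eval z - c * h.denom.eval z = 0 := by
        have := hpz
        rw [hpdef] at this
        simpa [eval_sub, eval_mul, eval_C] using this
      linear_combination h1
    · right
      rw [natDegree_C_mul (inv_ne_zero hl),
        natDegree_C_mul (mul_ne_zero hε (inv_ne_zero hl))] at hdeg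
      have hnum_eq : h.num = p + Polynomial.C c * h.denom := by rw [hpdef]; ring
      refine ⟨rfl, ?_, ?_⟩
      · rw [hnum_eq]
        exact (natDegree_add_le _ _).trans (max_le hdeg.le hCle)
      · have h1 : p.coeff d = 0 := coeff_eq_zero_of_natDegree_lt hdeg
        rw [hnum_eq, coeff_add, coeff_C_mul, h1, zero_add, coeff_natDegree]
  · rintro (⟨z, rfl, hz1, hz2⟩ | ⟨rfl, hdle, hcoeff⟩)
    · left
      refine ⟨z, rfl, ?_⟩
      rw [eval_mul, eval_C, hpdef, eval_sub, eval_mul, eval_C, hz2, sub_self, mul_zero]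
    · right
      refine ⟨rfl, ?_⟩
      rw [natDegree_C_mul (inv_ne_zero hl),
        natDegree_C_mul (mul_ne_zero hε (inv_ne_zero hl))]
      have hple : p.natDegree ≤ d := by
        rw [hpdef]
        exact (natDegree_sub_le _ _).trans (max_le hdle hCle)
      have hpc : p.coeff d = 0 := by
        rw [hpdef, coeff_sub, coeff_C_mul, ← coeff_natDegree (p := h.denom), ← hd] at *
        rw [hcoeff]; ring
      rcases lt_or_eq_of_le hple with h1 | h1
      · exact h1
      · exact absurd (h1 ▸ hpc) (by rw [coeff_natDegree]; exact hl)

theorem poleSet_add_subset (g h : RatFunc ℂ) : poleSet (g + h) ⊆ poleSet g ∪ poleSet h := by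
  rintro x (⟨z, rfl, hz⟩ | ⟨rfl, hdeg⟩)
  · obtain ⟨t, ht⟩ := RatFunc.denom_add_dvd g h
    have h0 : g.denom.eval z * h.denom.eval z = 0 := by
      have := congrArg (Polynomial.eval z) ht
      rw [eval_mul, eval_mul, hz, zero_mul] at this
      rw [this]
    rcases mul_eq_zero.mp h0 with h' | h'
    · exact Or.inl (Or.inl ⟨z, rfl, h'⟩)
    · exact Or.inr (Or.inl ⟨z, rfl, h'⟩)
  · by_cases hgh : g + h = 0
    · rw [hgh] at hdeg
      simp at hdeg
    by_cases hh : h = 0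
    · rw [hh, add_zero] at hdeg
      exact Or.inl (Or.inr ⟨rfl, hdeg⟩)
    have hle := RatFunc.intDegree_add_le hh hgh
    have h1 : 0 < (g + h).intDegree := by
      rw [RatFunc.intDegree]
      exact sub_pos.mpr (by exact_mod_cast hdeg)
    rcases lt_max_iff.mp (lt_of_lt_of_le h1 hle) with h' | h'
    · refine Or.inl (Or.inr ⟨rfl, ?_⟩)
      rw [RatFunc.intDegree] at h'
      exact_mod_cast sub_pos.mp h'
    · refine Or.inr (Or.inr ⟨rfl, ?_⟩)
      rw [RatFunc.intDegree] at h'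
      exact_mod_cast sub_pos.mp h'

theorem poleSet_neg (h : RatFunc ℂ) : poleSet (-h) = poleSet h := by
  have heq : -h = algebraMap ℂ[X] (RatFunc ℂ) (-h.num) / algebraMap ℂ[X] (RatFunc ℂ) h.denom := by
    rw [map_neg, neg_div (algebraMap ℂ[X] (RatFunc ℂ) h.denom) (algebraMap ℂ[X] (RatFunc ℂ) h.num), RatFunc.num_div_denom]
  obtain ⟨h1, h2⟩ := heq ▸ my_num_denom_unique (RatFunc.monic_denom h)
    ((RatFunc.isCoprime_num_denom h).neg_left)
  simp [poleSet, h1, h2, natDegree_neg]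

theorem mem_poleSet_add {g h : RatFunc ℂ} {x : OnePoint ℂ} (hg : x ∈ poleSet g)
    (hh : x ∉ poleSet h) : x ∈ poleSet (g + h) := by
  by_contra hf
  have h1 : x ∈ poleSet (g + h + -h) := by rwa [add_neg_cancel_right]
  rcases poleSet_add_subset _ _ h1 with h' | h'
  · exact hf h'
  · rw [poleSet_neg] at h'
    exact hh h'

theorem poleSet_C_empty (c : ℂ) : poleSet (RatFunc.C c) = ∅ := by
  ext x
  simp [poleSet, RatFunc.num_C, RatFunc.denom_C]

theorem solSet_nonempty {h : RatFunc ℂ} (hne : (poleSet h).Nonempty) (c : ℂ) :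
    (solSet h c).Nonempty := by
  have hnc : ∀ e : ℂ, h ≠ RatFunc.C e := by
    intro e he
    rw [he, poleSet_C_empty] at hne
    exact Set.not_nonempty_empty hne
  set p := h.num - Polynomial.C c * h.denom with hpdef
  have hcop : IsCoprime p h.denom := by
    have := (RatFunc.isCoprime_num_denom h).add_mul_right_left (-Polynomial.C c)
    simpa [hpdef, sub_eq_add_neg, mul_comm, neg_mul, mul_neg] using this
  have hp0 : p ≠ 0 := by
    intro h0
    apply hnc c
    have hnum : h.num = Polynomial.C c * h.denom := by
      rwa [hpdef, sub_eq_zero] at h0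
    calc h = algebraMap ℂ[X] (RatFunc ℂ) h.num / algebraMap ℂ[X] (RatFunc ℂ) h.denom :=
        (RatFunc.num_div_denom h).symm
      _ = RatFunc.C c := by
          rw [hnum, map_mul, RatFunc.algebraMap_C, mul_div_assoc,
            div_self (RatFunc.algebraMap_ne_zero (RatFunc.denom_ne_zero h)), mul_one]
  by_cases hdeg : 0 < p.degree
  · obtain ⟨z, hz⟩ := Complex.exists_root hdeg
    refine ⟨(z : OnePoint ℂ), Or.inl ⟨z, rfl, coprime_eval hcop hz, ?_⟩⟩
    have : p.eval z = 0 := hz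
    rw [hpdef, eval_sub, eval_mul, eval_C, sub_eq_zero] at this
    exact this
  · have hpC : p = Polynomial.C (p.coeff 0) := eq_C_of_degree_le_zero (le_of_not_gt hdeg)
    have he0 : p.coeff 0 ≠ 0 := fun h0 => hp0 (by rw [hpC, h0, map_zero])
    by_cases hd0 : h.denom.natDegree = 0
    · exfalso
      have hd1 : h.denom = 1 := (RatFunc.monic_denom h).natDegree_eq_zero.mp hd0
      apply hnc (c + p.coeff 0)
      have hnum : h.num = Polynomial.C (c + p.coeff 0) := by
        have : h.num = Polynomial.C c * h.denom + p := by rw [hpdef]; ring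
        rw [this, hd1, mul_one, Polynomial.C_add, ← hpC]
      calc h = algebraMap ℂ[X] (RatFunc ℂ) h.num / algebraMap ℂ[X] (RatFunc ℂ) h.denom :=
          (RatFunc.num_div_denom h).symm
        _ = RatFunc.C (c + p.coeff 0) := by
            rw [hnum, hd1, map_one, div_one, RatFunc.algebraMap_C]
    · refine ⟨∞, Or.inr ⟨rfl, ?_, ?_⟩⟩
      · have : h.num = Polynomial.C c * h.denom + p := by rw [hpdef]; ring
        rw [this]
        refine (natDegree_add_le _ _).trans (max_le (natDegree_C_mul_le _ _) ?_)
        rw [hpC]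
        simp
      · have hnum : h.num = Polynomial.C c * h.denom + p := by rw [hpdef]; ring
        rw [hnum, coeff_add, coeff_C_mul, coeff_natDegree, hpC, coeff_C,
          if_neg hd0, add_zero]

/-- For the recursively defined rational functions `r 0 = z`, `r 1 = ε₁/(z - a₁)`,
`r (n+2) = r n + ε (n+2) / (r (n+1) - a (n+2))`, if the pole sets of consecutive terms are
disjoint and the solutions of `r (n+1) = a (n+2)` avoid the poles of `r n`, then the pole
set of `r n` is strictly contained in the pole set of `r (n+2)`. -/
theorem poleSet_strict_mono (ε a : ℕ → ℂ) (hε : ∀ n, ε n ≠ 0)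
    (r : ℕ → RatFunc ℂ)
    (h0 : r 0 = RatFunc.X)
    (h1 : r 1 = RatFunc.C (ε 1) / (RatFunc.X - RatFunc.C (a 1)))
    (hrec : ∀ n, r (n + 2) = r n + RatFunc.C (ε (n + 2)) / (r (n + 1) - RatFunc.C (a (n + 2))))
    (hdisj : ∀ n, poleSet (r n) ∩ poleSet (r (n + 1)) = ∅)
    (hsol : ∀ n, solSet (r (n + 1)) (a (n + 2)) ∩ poleSet (r n) = ∅) :
    ∀ n, poleSet (r n) ⊂ poleSet (r (n + 2)) := by

  have step : ∀ n, (poleSet (r (n + 1))).Nonempty → poleSet (r n) ⊂ poleSet (r (n + 2)) := by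
    intro n hne
    have hnc : r (n + 1) ≠ RatFunc.C (a (n + 2)) := by
      intro he
      rw [he, poleSet_C_empty] at hne
      exact Set.not_nonempty_empty hne
    have hps : poleSet (RatFunc.C (ε (n + 2)) / (r (n + 1) - RatFunc.C (a (n + 2)))) =
        solSet (r (n + 1)) (a (n + 2)) := poleSet_C_div_eq_solSet (hε _) hnc
    have hnotin : ∀ x ∈ poleSet (r n), x ∉ solSet (r (n + 1)) (a (n + 2)) := by
      intro x hx hsx
      have h2 := hsol n
      have : x ∈ solSet (r (n + 1)) (a (n + 2)) ∩ poleSet (r n) := ⟨hsx, hx⟩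
      rw [h2] at this
      exact this
    rw [Set.ssubset_def]
    constructor
    · intro x hx
      rw [hrec n]
      exact mem_poleSet_add hx (by rw [hps]; exact hnotin x hx)
    · intro hsub
      obtain ⟨x, hx⟩ := solSet_nonempty hne (a (n + 2))
      have hxg : x ∉ poleSet (r n) := fun hxg => hnotin x hxg hx
      apply hxg
      apply hsub
      rw [hrec n, add_comm]
      exact mem_poleSet_add (by rw [hps]; exact hx) hxg
  have h01 : (poleSet (r 0)).Nonempty := by
    refine ⟨∞, Or.inr ⟨rfl, ?_⟩⟩
    rw [h0, RatFunc.num_X, RatFunc.denom_X]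
    simp
  have h11 : (poleSet (r 1)).Nonempty := by
    rw [h1, poleSet_C_div_eq_solSet (hε 1) (fun he => ?_)]
    · refine ⟨((a 1 : ℂ) : OnePoint ℂ), Or.inl ⟨a 1, rfl, ?_, ?_⟩⟩
      · rw [RatFunc.denom_X]
        simp
      · rw [RatFunc.num_X, RatFunc.denom_X]
        simp
    · have := congrArg RatFunc.num he
      rw [RatFunc.num_X, RatFunc.num_C] at this
      exact Polynomial.X_ne_C _ this
  have hN : ∀ n, (poleSet (r n)).Nonempty ∧ (poleSet (r (n + 1))).Nonempty := by
    intro n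
    induction n with
    | zero => exact ⟨h01, h11⟩
    | succ m ih =>
      refine ⟨ih.2, ?_⟩
      obtain ⟨x, hx, -⟩ := Set.exists_of_ssubset (step m ih.2)
      exact ⟨x, hx⟩
  exact fun n => step n (hN n).2
end

section
/- Let r be a rational function with exactly k poles, all simple, at points w_1, …, w_k of the Riemann sphere, and suppose |a| ≥ T_0 implies r(z) = a has k distinct solutions. Then for all sufficiently large T, the set Ω(r,T) = {z ∉ r^{-1}(∞) : |r(z)| > T} is a disjoint union of k connected open sets, each containing exactly one pole in its closure, and for every a with |a| > T each of these components contains exactly one solution of r(z) = a. -/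
/-!
Near a pole `w`, `r` is conjugate to the inversion `u ↦ 1/u` of the Riemann sphere: at a finite
pole `p`, `r = 1/h` with `h = denom/num`, which has a simple zero at `p`; at `∞` one uses the chart
`u ↦ 1/u` and `h u = u · rev(denom)(u) / rev(num)(u)`, which needs `deg num = deg denom + 1`
(continuity of `r` at `∞` forces `deg num > deg denom`). By the inverse function theorem `h` is a
local homeomorphism, so the part of `Ω(r, T)` near `w` is the image of the punctured disc of radius
`1/T`: it is connected, accumulates at `w`, and meets each level set `r = a`, `|a| > T`, exactly
once. Outside disjoint neighbourhoods of the poles `r` is bounded by compactness, so for large `T`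
these pieces make up all of `Ω(r, T)`.
-/

open Set Function Filter Metric Polynomial OnePoint Topology

noncomputable section

lemma closure_inter_range_eq_singleton {ι X : Type*} [TopologicalSpace X] {w : ι → X}
    {O : ι → Set X} (hO : ∀ i, O i ∈ 𝓝 (w i)) (hdisj : Pairwise (Disjoint on O)) {U : Set X}
    {i : ι} (hU : U ⊆ O i) (hwU : w i ∈ closure U) : closure U ∩ range w = {w i} := by
  refine subset_antisymm ?_ (singleton_subset_iff.2 ⟨hwU, i, rfl⟩)
  rintro _ ⟨hj, j, rfl⟩
  obtain rfl : j = i := by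
    by_contra hji
    obtain ⟨x, hxj, hxU⟩ := mem_closure_iff_nhds.1 hj (O j) (hO j)
    exact disjoint_left.1 (hdisj hji) hxj (hU hxU)
  rfl

lemma isConnected_ball_zero_sdiff_zero {ρ : ℝ} (hρ : 0 < ρ) :
    IsConnected (ball (0 : ℂ) ρ \ {0}) := by
  have himage : Complex.exp '' {z | z.re < Real.log ρ} = ball (0 : ℂ) ρ \ {0} := by
    ext w
    constructor
    · rintro ⟨z, hz, rfl⟩
      refine ⟨?_, Complex.exp_ne_zero z⟩
      rw [mem_ball_zero_iff, Complex.norm_exp]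
      exact (Real.lt_log_iff_exp_lt hρ).1 hz
    · rintro ⟨hw, hw0 : w ≠ 0⟩
      refine ⟨Complex.log w, ?_, Complex.exp_log hw0⟩
      rw [mem_ofPred_eq, Complex.log_re]
      exact Real.log_lt_log (norm_pos_iff.2 hw0) (mem_ball_zero_iff.1 hw)
  rw [← himage]
  refine ((convex_halfSpace_re_lt _).isConnected ?_).image _ Complex.continuous_exp.continuousOn
  exact ⟨(Real.log ρ - 1 : ℝ), by simp⟩

lemma zero_mem_closure_ball_zero_sdiff_zero {ρ : ℝ} (hρ : 0 < ρ) :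
    (0 : ℂ) ∈ closure (ball (0 : ℂ) ρ \ {0}) := by
  rw [sdiff_eq]
  exact isOpen_ball.inter_closure ⟨mem_ball_self hρ, by simp⟩

section Omega

variable {X E : Type*} [NormedAddCommGroup E]

/-- The set `Ω(r, T)` of the paper. -/
def Omega (r : X → OnePoint E) (T : ℝ) : Set X := {x | ∃ c : E, r x = c ∧ T < ‖c‖}

lemma Omega_eq_preimage (r : X → OnePoint E) (T : ℝ) :
    Omega r T = r ⁻¹' (((↑) : E → OnePoint E) '' {c | T < ‖c‖}) := by
  ext x
  simp [Omega, eq_comm, and_comm]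

lemma isOpen_Omega [TopologicalSpace X] {r : X → OnePoint E} (hr : Continuous r) (T : ℝ) :
    IsOpen (Omega r T) := by
  rw [Omega_eq_preimage]
  exact (isOpen_image_coe.2 (isOpen_lt continuous_const continuous_norm)).preimage hr

lemma preimage_coe_subset_Omega {r : X → OnePoint E} {T : ℝ} {a : E} (ha : T < ‖a‖) :
    r ⁻¹' {(a : OnePoint E)} ⊆ Omega r T :=
  fun _ hx => ⟨a, hx, ha⟩

lemma eventually_Omega_subset [TopologicalSpace X] [CompactSpace X] [ProperSpace E]
    {r : X → OnePoint E} (hr : Continuous r) {G : Set X} (hG : IsOpen G)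
    (hpoles : r ⁻¹' {∞} ⊆ G) :
    ∀ᶠ T in atTop, Omega r T ⊆ G := by
  have hK : IsCompact (r '' Gᶜ) := hG.isClosed_compl.isCompact.image hr
  have hrange : r '' Gᶜ ⊆ range ((↑) : E → OnePoint E) := by
    rintro _ ⟨x, hx, rfl⟩
    exact OnePoint.ne_infty_iff_exists.1 fun h => hx (hpoles h)
  rw [← image_preimage_eq_of_subset hrange, ← isOpenEmbedding_coe.isEmbedding.isCompact_iff] at hK
  obtain ⟨M, hM⟩ := hK.isBounded.exists_norm_le
  filter_upwards [eventually_ge_atTop M] with T hT x ⟨c, hc, hTc⟩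
  by_contra hx
  have := hM c (show (c : OnePoint E) ∈ r '' Gᶜ from ⟨x, hx, hc⟩)
  linarith

end Omega

section SphereInv

variable {𝕜 : Type*} [NormedField 𝕜]

open scoped Classical in
def sphereInv (x : OnePoint 𝕜) : OnePoint 𝕜 :=
  x.elim ((0 : 𝕜) : OnePoint 𝕜) fun z => if z = 0 then ∞ else ((z⁻¹ : 𝕜) : OnePoint 𝕜)

@[simp] lemma sphereInv_infty : sphereInv (∞ : OnePoint 𝕜) = ((0 : 𝕜) : OnePoint 𝕜) := rfl

@[simp] lemma sphereInv_coe_zero : sphereInv ((0 : 𝕜) : OnePoint 𝕜) = ∞ := by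
  simp [sphereInv]

lemma sphereInv_coe_of_ne_zero {z : 𝕜} (hz : z ≠ 0) :
    sphereInv (z : OnePoint 𝕜) = ((z⁻¹ : 𝕜) : OnePoint 𝕜) := by
  simp [sphereInv, hz]

lemma sphereInv_involutive : Involutive (sphereInv : OnePoint 𝕜 → OnePoint 𝕜) := by
  intro x
  induction x using OnePoint.rec with
  | infty => simp
  | coe z =>
    rcases eq_or_ne z 0 with rfl | hz
    · simp
    · rw [sphereInv_coe_of_ne_zero hz, sphereInv_coe_of_ne_zero (inv_ne_zero hz), inv_inv]

lemma sphereInv_coe_eq_coe_iff {a b : 𝕜} (ha : a ≠ 0) :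
    sphereInv (b : OnePoint 𝕜) = a ↔ b = a⁻¹ := by
  rw [sphereInv_involutive.eq_iff, sphereInv_coe_of_ne_zero ha, OnePoint.coe_eq_coe]

lemma Omega_sphereInv_coe {T : ℝ} (hT : 0 < T) :
    Omega (fun b : 𝕜 => sphereInv (b : OnePoint 𝕜)) T = ball 0 T⁻¹ \ {0} := by
  ext b
  rcases eq_or_ne b 0 with rfl | hb
  · simp [Omega]
  · simp only [Omega, sphereInv_coe_of_ne_zero hb, OnePoint.coe_eq_coe, exists_eq_left',
      norm_inv, mem_ofPred_eq, Set.mem_sdiff, mem_ball_zero_iff, mem_singleton_iff, hb,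
      not_false_eq_true, and_true]
    exact lt_inv_comm₀ hT (norm_pos_iff.2 hb)

variable [ProperSpace 𝕜]

lemma continuous_sphereInv : Continuous (sphereInv : OnePoint 𝕜 → OnePoint 𝕜) := by
  rw [OnePoint.continuous_iff]
  constructor
  · have hev : (fun z : 𝕜 => sphereInv (z : OnePoint 𝕜)) =ᶠ[coclosedCompact 𝕜]
        fun z => ((z⁻¹ : 𝕜) : OnePoint 𝕜) := by
      filter_upwards [coclosedCompact_le_cofinite (finite_singleton (0 : 𝕜)).compl_mem_cofinite]
        with z hz
      exact sphereInv_coe_of_ne_zero hz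
    rw [tendsto_congr' hev, coclosedCompact_eq_cocompact, ← Metric.cobounded_eq_cocompact]
    exact (continuous_coe.tendsto 0).comp tendsto_inv₀_cobounded
  · rw [continuous_iff_continuousAt]
    intro z
    rcases eq_or_ne z 0 with rfl | hz
    · rw [← continuousWithinAt_compl_self, ContinuousWithinAt, sphereInv_coe_zero]
      have hev : (fun z : 𝕜 => sphereInv (z : OnePoint 𝕜)) =ᶠ[𝓝[≠] 0]
          fun z => ((z⁻¹ : 𝕜) : OnePoint 𝕜) :=
        eventually_nhdsWithin_of_forall fun z hz => sphereInv_coe_of_ne_zero hz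
      rw [tendsto_congr' hev]
      refine tendsto_coe_infty.comp ?_
      rw [coclosedCompact_eq_cocompact, ← Metric.cobounded_eq_cocompact]
      exact tendsto_inv₀_nhdsNE_zero
    · have hev : (fun z : 𝕜 => sphereInv (z : OnePoint 𝕜)) =ᶠ[𝓝 z]
          fun z => ((z⁻¹ : 𝕜) : OnePoint 𝕜) := by
        filter_upwards [isOpen_compl_singleton.mem_nhds hz] with y hy
        exact sphereInv_coe_of_ne_zero hy
      exact (continuous_coe.continuousAt.comp (continuousAt_inv₀ hz)).congr hev.symm

lemma isOpenEmbedding_sphereInv_coe :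
    IsOpenEmbedding (fun z : 𝕜 => sphereInv (z : OnePoint 𝕜)) :=
  (continuous_sphereInv.homeoOfEquivCompactToT2
    (f := sphereInv_involutive.toPerm)).isOpenEmbedding.comp isOpenEmbedding_coe

end SphereInv

section SimplePole

variable {X : Type*} [TopologicalSpace X]

def IsSimplePoleAt (r : X → OnePoint ℂ) (w : X) : Prop :=
  ∀ O ∈ 𝓝 w, ∃ ψ : OpenPartialHomeomorph ℂ X, 0 ∈ ψ.source ∧ ψ 0 = w ∧ ψ.target ⊆ O ∧
    EqOn (r ∘ ψ) (fun b => sphereInv (b : OnePoint ℂ)) ψ.source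

lemma isSimplePoleAt_of_hasStrictDerivAt {r : X → OnePoint ℂ} {Φ : ℂ → X}
    (hΦ : IsOpenEmbedding Φ) {h : ℂ → ℂ} {c d : ℂ} (hder : HasStrictDerivAt h d c) (hd : d ≠ 0)
    (hc : h c = 0) (hr : ∀ᶠ z in 𝓝 c, r (Φ z) = sphereInv (h z : OnePoint ℂ)) :
    IsSimplePoleAt r (Φ c) := by
  intro O hO
  obtain ⟨S, hSr, hS, hcS⟩ := _root_.eventually_nhds_iff.1
    (hr.and (hΦ.continuous.continuousAt.preimage_mem_nhds hO))
  have hh := hder.hasStrictFDerivAt_equiv hd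
  set e := (hh.toOpenPartialHomeomorph h).restrOpen S hS
  have he : ⇑e = h := rfl
  have hce : c ∈ e.source := ⟨hh.mem_toOpenPartialHomeomorph_source, hcS⟩
  refine ⟨e.symm.trans (hΦ.toOpenPartialHomeomorph Φ), ?_, ?_, ?_, ?_⟩
  · have := e.map_source hce
    rw [he, hc] at this
    simpa using this
  · have := e.left_inv hce
    rw [he, hc] at this
    simp [this]
  · rintro _ ⟨⟨z, -, rfl⟩, hz⟩
    rw [mem_preimage, hΦ.toOpenPartialHomeomorph_left_inv] at hz
    exact (hSr z hz.2).2
  · intro b hb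
    simp only [OpenPartialHomeomorph.trans_source, OpenPartialHomeomorph.symm_source,
      IsOpenEmbedding.toOpenPartialHomeomorph_source, preimage_univ, inter_univ] at hb
    have := (hSr _ (e.map_target hb).2).1
    rw [← he, e.right_inv hb] at this
    simpa using this

namespace OpenPartialHomeomorph

variable {r : X → OnePoint ℂ} {ψ : OpenPartialHomeomorph ℂ X}

lemma target_inter_preimage_eq (hr : EqOn (r ∘ ψ) (fun b => sphereInv (b : OnePoint ℂ)) ψ.source)
    (t : Set (OnePoint ℂ)) :
    ψ.target ∩ r ⁻¹' t = ψ '' (ψ.source ∩ (fun b => sphereInv (b : OnePoint ℂ)) ⁻¹' t) := by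
  rw [← hr.inter_preimage_eq, preimage_comp, image_inter_preimage, ψ.image_source_eq_target]

lemma target_inter_Omega_eq (hr : EqOn (r ∘ ψ) (fun b => sphereInv (b : OnePoint ℂ)) ψ.source)
    {T : ℝ} (hT : 0 < T) (hball : ball 0 T⁻¹ ⊆ ψ.source) :
    ψ.target ∩ Omega r T = ψ '' (ball 0 T⁻¹ \ {0}) := by
  rw [Omega_eq_preimage, target_inter_preimage_eq hr, ← Omega_eq_preimage, Omega_sphereInv_coe hT,
    inter_eq_right.2 (sdiff_subset.trans hball)]

lemma target_inter_preimage_coe_eq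
    (hr : EqOn (r ∘ ψ) (fun b => sphereInv (b : OnePoint ℂ)) ψ.source)
    {a : ℂ} (ha : a ≠ 0) (ha' : a⁻¹ ∈ ψ.source) :
    ψ.target ∩ r ⁻¹' {(a : OnePoint ℂ)} = {ψ a⁻¹} := by
  have : (fun b : ℂ => sphereInv (b : OnePoint ℂ)) ⁻¹' {(a : OnePoint ℂ)} = {a⁻¹} := by
    ext b
    simp [sphereInv_coe_eq_coe_iff ha]
  rw [target_inter_preimage_eq hr, this, inter_eq_right.2 (singleton_subset_iff.2 ha'),
    image_singleton]

lemma eventually_isConnected_and_mem_closure_and_ncard_eq_one (h0 : 0 ∈ ψ.source)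
    (hr : EqOn (r ∘ ψ) (fun b => sphereInv (b : OnePoint ℂ)) ψ.source) :
    ∀ᶠ T in atTop, IsConnected (ψ.target ∩ Omega r T) ∧ ψ 0 ∈ closure (ψ.target ∩ Omega r T) ∧
      ∀ a : ℂ, T < ‖a‖ → (ψ.target ∩ Omega r T ∩ r ⁻¹' {(a : OnePoint ℂ)}).ncard = 1 := by
  obtain ⟨ε, hε, hεψ⟩ := Metric.isOpen_iff.1 ψ.open_source 0 h0
  filter_upwards [eventually_gt_atTop ε⁻¹] with T hT
  have hT0 : 0 < T := (inv_pos.2 hε).trans hT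
  have hball : ball 0 T⁻¹ ⊆ ψ.source := (ball_subset_ball (inv_lt_of_inv_lt₀ hε hT).le).trans hεψ
  rw [target_inter_Omega_eq hr hT0 hball]
  refine ⟨(isConnected_ball_zero_sdiff_zero (inv_pos.2 hT0)).image _
      (ψ.continuousOn.mono (sdiff_subset.trans hball)),
    (ψ.continuousAt h0).continuousWithinAt.mem_closure_image
      (zero_mem_closure_ball_zero_sdiff_zero (inv_pos.2 hT0)), fun a ha => ?_⟩
  have ha' : a⁻¹ ∈ ψ.source := hball <| by
    rw [mem_ball_zero_iff, norm_inv]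
    exact inv_strictAnti₀ hT0 ha
  rw [← target_inter_Omega_eq hr hT0 hball, inter_assoc,
    inter_eq_right.2 (preimage_coe_subset_Omega ha),
    target_inter_preimage_coe_eq hr (norm_pos_iff.1 (hT0.trans ha)) ha', ncard_singleton]

end OpenPartialHomeomorph

end SimplePole

section RationalFunction

variable {r : OnePoint ℂ → OnePoint ℂ} {N D : ℂ[X]}

lemma eval_inv_eq_eval_reverse_mul_pow {K : Type*} [Field K] (p : K[X]) {u : K} (hu : u ≠ 0) :
    p.eval u⁻¹ = p.reverse.eval u * u⁻¹ ^ p.natDegree := by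
  have : Invertible u⁻¹ := invertibleOfNonzero (inv_ne_zero hu)
  simpa [eval₂_eq_eval_map] using (eval₂_reverse_mul_pow (RingHom.id K) u⁻¹ p).symm

lemma apply_coe_eq_sphereInv_div
    (hagree : ∀ z : ℂ, D.eval z ≠ 0 →
      r (z : OnePoint ℂ) = ((N.eval z / D.eval z : ℂ) : OnePoint ℂ))
    (hpole : ∀ z : ℂ, D.eval z = 0 → r (z : OnePoint ℂ) = ∞) {z : ℂ} (hz : N.eval z ≠ 0) :
    r (z : OnePoint ℂ) = sphereInv ((D.eval z / N.eval z : ℂ) : OnePoint ℂ) := by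
  rcases eq_or_ne (D.eval z) 0 with hD | hD
  · simp [hpole z hD, hD]
  · rw [hagree z hD, sphereInv_coe_of_ne_zero (div_ne_zero hD hz), inv_div]

lemma isSimplePoleAt_coe {p : ℂ} (hp : D.eval p = 0) (hD' : D.derivative.eval p ≠ 0)
    (hN : N.eval p ≠ 0)
    (hr : ∀ z : ℂ, N.eval z ≠ 0 →
      r (z : OnePoint ℂ) = sphereInv ((D.eval z / N.eval z : ℂ) : OnePoint ℂ)) :
    IsSimplePoleAt r (p : OnePoint ℂ) := by
  refine isSimplePoleAt_of_hasStrictDerivAt isOpenEmbedding_coe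
    ((D.hasStrictDerivAt p).fun_div (N.hasStrictDerivAt p) hN) ?_ (by simp [hp]) ?_
  · simp [hp, hD', hN]
  · filter_upwards [N.continuous.continuousAt.eventually_ne hN] with z hz
    exact hr z hz

lemma isSimplePoleAt_infty (hD : D ≠ 0) (hdeg : N.natDegree = D.natDegree + 1) (hinf : r ∞ = ∞)
    (hagree : ∀ z : ℂ, D.eval z ≠ 0 →
      r (z : OnePoint ℂ) = ((N.eval z / D.eval z : ℂ) : OnePoint ℂ)) :
    IsSimplePoleAt r ∞ := by
  have hN : N ≠ 0 := by rintro rfl; simp at hdeg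
  have hN0 : N.reverse.eval 0 ≠ 0 := by simpa [← coeff_zero_eq_eval_zero] using hN
  have hD0 : D.reverse.eval 0 ≠ 0 := by simpa [← coeff_zero_eq_eval_zero] using hD
  have hder := ((hasStrictDerivAt_id (x := (0 : ℂ))).fun_mul (D.reverse.hasStrictDerivAt 0)).fun_div
    (N.reverse.hasStrictDerivAt 0) hN0
  rw [← sphereInv_coe_zero (𝕜 := ℂ)]
  refine isSimplePoleAt_of_hasStrictDerivAt isOpenEmbedding_sphereInv_coe hder
    (by simp [hD0, hN0]) (by simp) ?_
  filter_upwards [N.reverse.continuous.continuousAt.eventually_ne hN0,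
    D.reverse.continuous.continuousAt.eventually_ne hD0] with u hNu hDu
  rw [id]
  rcases eq_or_ne u 0 with rfl | hu
  · simpa using hinf
  have hDu' : D.eval u⁻¹ ≠ 0 := by
    rw [eval_inv_eq_eval_reverse_mul_pow D hu]
    exact mul_ne_zero hDu (pow_ne_zero _ (inv_ne_zero hu))
  -- `num(1/u) / denom(1/u) = rev num(u) / (u · rev denom(u))` because `deg num = deg denom + 1`
  rw [sphereInv_coe_of_ne_zero hu, hagree _ hDu',
    sphereInv_coe_of_ne_zero (div_ne_zero (mul_ne_zero hu hDu) hNu), OnePoint.coe_eq_coe,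
    eval_inv_eq_eval_reverse_mul_pow D hu, eval_inv_eq_eval_reverse_mul_pow N hu, hdeg, pow_succ]
  field_simp

lemma natDegree_lt_natDegree_of_apply_infty (hr : Continuous r) (hD : D ≠ 0)
    (hagree : ∀ z : ℂ, D.eval z ≠ 0 →
      r (z : OnePoint ℂ) = ((N.eval z / D.eval z : ℂ) : OnePoint ℂ))
    (hinf : r ∞ = ∞) : D.natDegree < N.natDegree := by
  by_contra! hle
  have hdeg : N.degree ≤ D.degree := by
    rw [degree_eq_natDegree hD]
    exact degree_le_of_natDegree_le hle
  obtain ⟨C, hC⟩ := (isBigO_cobounded_of_degree_le hdeg).bound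
  rw [Metric.cobounded_eq_cocompact, ← coclosedCompact_eq_cocompact] at hC
  have hbounded :
      ∀ᶠ z : ℂ in coclosedCompact ℂ, r z ∈ ((↑) : ℂ → OnePoint ℂ) '' closedBall 0 C := by
    filter_upwards [coclosedCompact_le_cofinite (eventually_cofinite_not_isRoot hD), hC]
      with z hDz hz
    rw [hagree z hDz]
    refine mem_image_of_mem _ ?_
    rwa [mem_closedBall_zero_iff, norm_div, div_le_iff₀ (norm_pos_iff.2 hDz)]
  have hlim : Tendsto (fun z : ℂ => r z) (coclosedCompact ℂ) (𝓝 ∞) :=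
    hinf ▸ (hr.tendsto ∞).comp tendsto_coe_infty
  exact infty_notMem_image_coe
    (((isCompact_closedBall 0 C).image continuous_coe).isClosed.mem_of_tendsto hlim hbounded)

lemma isSimplePoleAt_of_apply_eq_infty (F : RatFunc ℂ) (hcont : Continuous r)
    (hagree : ∀ z : ℂ, F.denom.eval z ≠ 0 →
      r (z : OnePoint ℂ) = ((F.num.eval z / F.denom.eval z : ℂ) : OnePoint ℂ))
    (hpole : ∀ z : ℂ, F.denom.eval z = 0 → r (z : OnePoint ℂ) = ∞)
    (hsimple : ∀ z : ℂ, F.denom.rootMultiplicity z ≤ 1)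
    (hsimple_inf : F.num.natDegree ≤ F.denom.natDegree + 1) {x : OnePoint ℂ} (hx : r x = ∞) :
    IsSimplePoleAt r x := by
  induction x using OnePoint.rec with
  | infty =>
    have := natDegree_lt_natDegree_of_apply_infty hcont F.denom_ne_zero hagree hx
    exact isSimplePoleAt_infty F.denom_ne_zero (by omega) hx hagree
  | coe p =>
    have hp : F.denom.eval p = 0 := by
      by_contra hp
      exact coe_ne_infty _ (hagree p hp ▸ hx)
    have hN : F.num.eval p ≠ 0 := by
      simpa [hp] using aeval_ne_zero_of_isCoprime F.isCoprime_num_denom p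
    have hD' : F.denom.derivative.eval p ≠ 0 := fun h => (hsimple p).not_gt
      ((one_lt_rootMultiplicity_iff_isRoot F.denom_ne_zero).2 ⟨hp, h⟩)
    exact isSimplePoleAt_coe hp hD' hN fun z hz => apply_coe_eq_sphereInv_div hagree hpole hz

end RationalFunction

theorem omega_decomposition_general (F : RatFunc ℂ) (r : OnePoint ℂ → OnePoint ℂ)
    (hcont : Continuous r)
    (hagree : ∀ z : ℂ, F.denom.eval z ≠ 0 →
      r (z : OnePoint ℂ) = ((F.num.eval z / F.denom.eval z : ℂ) : OnePoint ℂ))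
    (hpole : ∀ z : ℂ, F.denom.eval z = 0 → r (z : OnePoint ℂ) = ∞)
    (k : ℕ) (w : Fin k → OnePoint ℂ) (hw : Function.Injective w)
    (hpoles : r ⁻¹' {∞} = Set.range w)
    (hsimple : ∀ z : ℂ, F.denom.rootMultiplicity z ≤ 1)
    (hsimple_inf : F.num.natDegree ≤ F.denom.natDegree + 1)
    (T₀ : ℝ) :
    ∃ T₁ : ℝ, T₀ ≤ T₁ ∧ ∀ T : ℝ, T₁ ≤ T →
      ∃ U : Fin k → Set (OnePoint ℂ),
        (∀ i, IsOpen (U i)) ∧ (∀ i, IsConnected (U i)) ∧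
        Pairwise (Function.onFun Disjoint U) ∧
        ({x : OnePoint ℂ | x ∉ r ⁻¹' {∞} ∧ ∃ c : ℂ, r x = (c : OnePoint ℂ) ∧ T < ‖c‖}
          = ⋃ i, U i) ∧
        (∀ i, (closure (U i) ∩ r ⁻¹' {∞}).ncard = 1) ∧
        (∀ a : ℂ, T < ‖a‖ → ∀ i, (U i ∩ r ⁻¹' {(a : OnePoint ℂ)}).ncard = 1) := by
  obtain ⟨O, hO, hOdisj⟩ := Pairwise.exists_mem_filter_of_disjoint (l := fun i => 𝓝 (w i))
    fun i j hij => disjoint_nhds_nhds.2 (hw.ne hij)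
  have hw_pole (i : Fin k) : IsSimplePoleAt r (w i) :=
    isSimplePoleAt_of_apply_eq_infty F hcont hagree hpole hsimple hsimple_inf
      (show w i ∈ r ⁻¹' {∞} from hpoles ▸ mem_range_self i)
  choose ψ hψ0 hψw hψO hψr using fun i => hw_pole i (O i) (hO i)
  have hcover : ∀ᶠ T in atTop, Omega r T ⊆ ⋃ i, (ψ i).target := by
    refine eventually_Omega_subset hcont (isOpen_iUnion fun i => (ψ i).open_target) ?_
    rw [hpoles]
    rintro _ ⟨i, rfl⟩
    exact mem_iUnion.2 ⟨i, hψw i ▸ (ψ i).map_source (hψ0 i)⟩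
  obtain ⟨T₁, hT₁⟩ := eventually_atTop.1 <| (eventually_all.2 fun i =>
    (ψ i).eventually_isConnected_and_mem_closure_and_ncard_eq_one (hψ0 i) (hψr i)).and hcover
  refine ⟨max T₀ T₁, le_max_left _ _, fun T hT => ?_⟩
  obtain ⟨hlocal, hcoverT⟩ := hT₁ T (le_of_max_le_right hT)
  choose hconn hclosure hcount using hlocal
  refine ⟨fun i => (ψ i).target ∩ Omega r T,
    fun i => (ψ i).open_target.inter (isOpen_Omega hcont T), hconn,
    fun i j hij => (hOdisj hij).mono (inter_subset_left.trans (hψO i))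
      (inter_subset_left.trans (hψO j)), ?_, fun i => ?_, fun a ha i => hcount i a ha⟩
  · rw [← iUnion_inter, inter_eq_right.2 hcoverT]
    exact Set.ext fun x => and_iff_right_of_imp fun ⟨c, hc, _⟩ => by simp [hc]
  · rw [hpoles, closure_inter_range_eq_singleton hO hOdisj (inter_subset_left.trans (hψO i))
      (hψw i ▸ hclosure i), ncard_singleton]

/-- Let `r` be (the extension to the Riemann sphere of) a rational function `F = num/denom`
whose poles `w 0, …, w (k-1)` are all simple (this includes a possible simple pole at `∞`),
and suppose that `r z = a` has exactly `k` distinct solutions whenever `T₀ ≤ ‖a‖`.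
Then for all sufficiently large `T` the set `Ω(r,T) = {z ∉ r⁻¹(∞) : ‖r z‖ > T}` is a
disjoint union of `k` connected open sets, each containing exactly one pole in its closure,
and for every `a` with `‖a‖ > T` each component contains exactly one solution of `r z = a`. -/
theorem omega_decomposition (F : RatFunc ℂ) (r : OnePoint ℂ → OnePoint ℂ)
    (hcont : Continuous r)
    (hagree : ∀ z : ℂ, F.denom.eval z ≠ 0 →
      r (z : OnePoint ℂ) = ((F.num.eval z / F.denom.eval z : ℂ) : OnePoint ℂ))
    (hpole : ∀ z : ℂ, F.denom.eval z = 0 → r (z : OnePoint ℂ) = ∞)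
    (k : ℕ) (w : Fin k → OnePoint ℂ) (hw : Function.Injective w)
    (hpoles : r ⁻¹' {∞} = Set.range w)
    (hsimple : ∀ z : ℂ, F.denom.rootMultiplicity z ≤ 1)
    (hsimple_inf : F.num.natDegree ≤ F.denom.natDegree + 1)
    (T₀ : ℝ)
    (hsol : ∀ a : ℂ, T₀ ≤ ‖a‖ → (r ⁻¹' {(a : OnePoint ℂ)}).ncard = k) :
    ∃ T₁ : ℝ, T₀ ≤ T₁ ∧ ∀ T : ℝ, T₁ ≤ T →
      ∃ U : Fin k → Set (OnePoint ℂ),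
        (∀ i, IsOpen (U i)) ∧ (∀ i, IsConnected (U i)) ∧
        Pairwise (Function.onFun Disjoint U) ∧
        ({x : OnePoint ℂ | x ∉ r ⁻¹' {∞} ∧ ∃ c : ℂ, r x = (c : OnePoint ℂ) ∧ T < ‖c‖}
          = ⋃ i, U i) ∧
        (∀ i, (closure (U i) ∩ r ⁻¹' {∞}).ncard = 1) ∧
        (∀ a : ℂ, T < ‖a‖ → ∀ i, (U i ∩ r ⁻¹' {(a : OnePoint ℂ)}).ncard = 1) :=
  omega_decomposition_general F r hcont hagree hpole k w hw hpoles hsimple hsimple_inf T₀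
end
end

section
/- Let Ω ⊆ ℂ be open and γ_n : Ω → ℂ² a sequence of holomorphic maps converging uniformly on compact subsets of Ω to γ. Suppose {K_n} is an exhaustion of Ω by compact sets with K_n ⊆ interior(K_{n+1}), and suppose there exists a sequence R_n → ∞ such that for every n and every z ∈ K_n \ K_{n-1}, |γ_m(z)| ≥ R_{n-3} for all m ≥ n. Then γ is a proper map from Ω to ℂ². -/
/-!
If `L ⊆ ℂ²` lies in the ball of radius `C` and `R k > C` for `k ≥ N`, then a point of `Ω`
outside `K (N + 3)` lies in some `K n \ K (n - 1)` with `n > N + 3`; there `‖γ m‖ ≥ R (n - 3) > C`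
for all `m ≥ n`, hence also `‖γ‖ > C` in the limit. So `Ω ∩ γ⁻¹ L` is a closed subset of the
compact set `K (N + 3)`, closed because `γ` is continuous as a locally uniform limit of
holomorphic maps.
-/

open Filter Topology

theorem Monotone.exists_lt_mem_diff_pred {α : Type*} {K : ℕ → Set α} (hK : Monotone K)
    {z : α} (hz : z ∈ ⋃ n, K n) {M : ℕ} (hzM : z ∉ K M) :
    ∃ n, M < n ∧ z ∈ K n \ K (n - 1) := by
  classical
  have hex : ∃ n, z ∈ K n := Set.mem_iUnion.1 hz
  have hMn : M < Nat.find hex := by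
    by_contra! h
    exact hzM (hK h (Nat.find_spec hex))
  exact ⟨Nat.find hex, hMn, Nat.find_spec hex, Nat.find_min hex (by omega)⟩

theorem mem_of_norm_le_of_tendsto {α E : Type*} [SeminormedAddGroup E] {K : ℕ → Set α}
    (hK : Monotone K) {f : ℕ → α → E} {g : α → E} {R : ℕ → ℝ} {d : ℕ}
    (hlarge : ∀ n, ∀ z ∈ K n \ K (n - 1), ∀ m, n ≤ m → R (n - d) ≤ ‖f m z‖)
    {C : ℝ} {N : ℕ} (hN : ∀ k ≥ N, C < R k) {z : α} (hz : z ∈ ⋃ n, K n)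
    (hfz : Tendsto (f · z) atTop (𝓝 (g z))) (hgz : ‖g z‖ ≤ C) : z ∈ K (N + d) := by
  by_contra hzK
  obtain ⟨n, hn, hzn⟩ := hK.exists_lt_mem_diff_pred hz hzK
  have hR : R (n - d) ≤ ‖g z‖ :=
    ge_of_tendsto hfz.norm (eventually_atTop.2 ⟨n, hlarge n z hzn⟩)
  linarith [hN (n - d) (by omega)]

theorem isCompact_sep_of_subset {X Y : Type*} [TopologicalSpace X] [T2Space X]
    [TopologicalSpace Y] {Ω S : Set X} {f : X → Y} {L : Set Y} (hf : ContinuousOn f Ω)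
    (hS : IsCompact S) (hSΩ : S ⊆ Ω) (hL : IsClosed L) (hsub : {z ∈ Ω | f z ∈ L} ⊆ S) :
    IsCompact {z ∈ Ω | f z ∈ L} := by
  have heq : {z ∈ Ω | f z ∈ L} = S ∩ f ⁻¹' L :=
    Set.Subset.antisymm (fun z hz => ⟨hsub hz, hz.2⟩) fun z hz => ⟨hSΩ hz.1, hz.2⟩
  rw [heq]
  exact hS.of_isClosed_subset
    ((hf.mono hSΩ).preimage_isClosed_of_isClosed hS.isClosed hL) Set.inter_subset_left

theorem proper_limit_map_general (Ω : Set ℂ)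
    (γn : ℕ → ℂ → ℂ × ℂ) (γ : ℂ → ℂ × ℂ)
    (hhol : ∀ n, DifferentiableOn ℂ (γn n) Ω)
    (hconv : TendstoLocallyUniformlyOn γn γ atTop Ω)
    (K : ℕ → Set ℂ) (hKcompact : ∀ n, IsCompact (K n))
    (hKmono : ∀ n, K n ⊆ interior (K (n + 1)))
    (hKunion : (⋃ n, K n) = Ω)
    (R : ℕ → ℝ) (hR : Tendsto R atTop atTop)
    (hlarge : ∀ n : ℕ, ∀ z ∈ K n \ K (n - 1), ∀ m, n ≤ m → R (n - 3) ≤ ‖γn m z‖) :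
    ∀ L : Set (ℂ × ℂ), IsCompact L → IsCompact {z ∈ Ω | γ z ∈ L} := by
  intro L hL
  have hKmon : Monotone K :=
    monotone_nat_of_le_succ fun n => (hKmono n).trans interior_subset
  have hcont : ContinuousOn γ Ω :=
    hconv.continuousOn (Frequently.of_forall fun n => (hhol n).continuousOn)
  obtain ⟨C, hC⟩ : ∃ C, ∀ w ∈ L, ‖w‖ ≤ C := by
    obtain ⟨C, hC⟩ := hL.isBounded.subset_closedBall 0
    exact ⟨C, fun w hw => by simpa using hC hw⟩
  obtain ⟨N, hN⟩ := (hR.eventually_gt_atTop C).exists_forall_of_atTop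
  refine isCompact_sep_of_subset hcont (hKcompact (N + 3))
    (hKunion ▸ Set.subset_iUnion K _) hL.isClosed ?_
  rintro z ⟨hzΩ, hzL⟩
  exact mem_of_norm_le_of_tendsto hKmon hlarge hN (hKunion ▸ hzΩ)
    (hconv.tendsto_at hzΩ) (hC _ hzL)

/-- Let `Ω ⊆ ℂ` be open and `γ n : Ω → ℂ²` holomorphic maps converging locally uniformly
on `Ω` to `γ`, let `{K n}` be a compact exhaustion of `Ω` with `K n ⊆ interior (K (n+1))`,
and suppose `R n → ∞` is such that for all `z ∈ K n \ K (n-1)` and all `m ≥ n`,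
`‖γ m z‖ ≥ R (n-3)`. Then `γ` is a proper map of `Ω` into `ℂ²`: the preimage in `Ω` of
every compact subset of `ℂ²` is compact. -/
theorem proper_limit_map (Ω : Set ℂ) (hΩ : IsOpen Ω)
    (γn : ℕ → ℂ → ℂ × ℂ) (γ : ℂ → ℂ × ℂ)
    (hhol : ∀ n, DifferentiableOn ℂ (γn n) Ω)
    (hconv : TendstoLocallyUniformlyOn γn γ atTop Ω)
    (K : ℕ → Set ℂ) (hKcompact : ∀ n, IsCompact (K n))
    (hKmono : ∀ n, K n ⊆ interior (K (n + 1)))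
    (hKunion : (⋃ n, K n) = Ω)
    (R : ℕ → ℝ) (hR : Tendsto R atTop atTop)
    (hlarge : ∀ n : ℕ, ∀ z ∈ K n \ K (n - 1), ∀ m, n ≤ m → R (n - 3) ≤ ‖γn m z‖) :
    ∀ L : Set (ℂ × ℂ), IsCompact L → IsCompact {z ∈ Ω | γ z ∈ L} :=
  proper_limit_map_general Ω γn γ hhol hconv K hKcompact hKmono hKunion R hR hlarge
end
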